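/- arXiv:2308.14318 — 4 statements merged into one kernel-verified Lean document; each statement's English description precedes it below -/
import Mathlib

section
/- The Dickson product polynomial f_n(X) = ∏_w (X + w), where w runs over all p^n 𝔽_p-linear combinations of the variables y_1,…,y_n, is a monic polynomial of degree p^n in X whose coefficient at X^j is zero whenever j is not of the form p^r with 0 ≤ r ≤ n; in particular f_n(X) = X^{p^n} + ∑_{r=0}^{n-1} D_{n,r} X^{p^r} for uniquely determined polynomials D_{n,r} ∈ S. -/
/-!
Let `V` be the set of the `p ^ n` linear forms and `f = ∏_{w ∈ V} (X + w)`. Since `V` is an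
additive group, `f (X + w) = f X` and `f w = 0` for `w ∈ V`, so `f (X + Y) - f X - f Y`, a polynomial
in `Y` of degree `< p ^ n`, vanishes at the `p ^ n` points of `V`: `f` is additive. Comparing the
coefficients of `X ^ i * Y ^ k` in `f (X + Y) = f X + f Y` gives `(i + k).choose k * a_{i+k} = 0`
for `i, k ≥ 1`, and when `j` is not a power of `p` some `j.choose k` with `0 < k < j` is prime to `p`.
-/

open Polynomial

noncomputable def dicksonF (p n : ℕ) [Fact p.Prime] : Polynomial (MvPolynomial (Fin n) (ZMod p)) :=
  ∏ c : Fin n → ZMod p,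
    (Polynomial.X + Polynomial.C (∑ i : Fin n, c i • MvPolynomial.X i))

namespace Polynomial

section Semiring

variable {R : Type*} [Semiring R]

lemma hasseDeriv_map {S : Type*} [Semiring S] (φ : R →+* S) (f : R[X]) (k : ℕ) :
    hasseDeriv k (f.map φ) = (hasseDeriv k f).map φ := by
  ext i : 1
  simp [hasseDeriv_coeff, coeff_map]

lemma eq_sum_C_mul_X_pow_of_coeff_eq_zero {ι : Type*} [Fintype ι] {e : ι → ℕ}
    (he : Function.Injective e) {f : R[X]} (hf : ∀ j, j ∉ Set.range e → f.coeff j = 0) :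
    f = ∑ i, C (f.coeff (e i)) * X ^ e i := by
  classical
  calc f = ∑ j ∈ f.support, C (f.coeff j) * X ^ j := as_sum_support_C_mul_X_pow f
    _ = ∑ j ∈ Finset.univ.image e, C (f.coeff j) * X ^ j := by
      refine Finset.sum_subset (fun j hj => ?_) fun j _ hj => by simp [notMem_support_iff.mp hj]
      by_contra hje
      exact mem_support_iff.mp hj (hf j (by simpa using hje))
    _ = ∑ i, C (f.coeff (e i)) * X ^ e i := Finset.sum_image fun i _ k _ h => he h

lemma coeff_sum_C_mul_X_pow {ι : Type*} [Fintype ι] {e : ι → ℕ} (he : Function.Injective e)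
    (a : ι → R) (i : ι) : (∑ k, C (a k) * X ^ e k).coeff (e i) = a i := by
  classical
  simp [he.eq_iff]

end Semiring

variable {R : Type*} [CommRing R]

/-- `f (X + Y) = f X + f Y`, read in `R[X][Y]`: the variable of the outer ring is `Y`,
and `X` enters as the constant `C X`. -/
def IsAdditive (f : R[X]) : Prop :=
  taylor (X : R[X]) (f.map C) = f.map C + C f

namespace IsAdditive

variable {f : R[X]}

lemma coeff_zero (hf : f.IsAdditive) : f.coeff 0 = 0 := by
  simpa [taylor_coeff_zero, coeff_map, eval_map, eval₂_C_X] using congrArg (coeff · 0) hf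

lemma hasseDeriv_eq_C (hf : f.IsAdditive) {k : ℕ} (hk : k ≠ 0) :
    hasseDeriv k f = C (f.coeff k) := by
  simpa [taylor_coeff, hasseDeriv_map, coeff_map, coeff_C, hk, eval_map, eval₂_C_X]
    using congrArg (coeff · k) hf

lemma choose_mul_coeff_eq_zero (hf : f.IsAdditive) {i k : ℕ} (hi : i ≠ 0) (hk : k ≠ 0) :
    ((i + k).choose k : R) * f.coeff (i + k) = 0 := by
  simpa [hasseDeriv_coeff, coeff_C, hi] using congrArg (coeff · i) (hf.hasseDeriv_eq_C hk)

lemma exists_eq_pow_of_coeff_ne_zero (p : ℕ) [hp : Fact p.Prime] [CharP R p]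
    (hf : f.IsAdditive) {j : ℕ} (hj : f.coeff j ≠ 0) : ∃ r, j = p ^ r := by
  have hj0 : 0 < j := Nat.pos_of_ne_zero fun h => hj (h ▸ hf.coeff_zero)
  refine ⟨_, Choose.eq_pow_multiplicity_of_choose_modEq_zero_nat hj0 fun k hk => ?_⟩
  obtain ⟨hk1, hkj⟩ := Finset.mem_Icc.mp hk
  have hzero := hf.choose_mul_coeff_eq_zero (i := j - k) (k := k) (by omega) (by omega)
  rw [Nat.sub_add_cancel (by omega)] at hzero
  rw [Nat.modEq_zero_iff_dvd]
  by_contra hndvd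
  exact hj (((CharP.isUnit_natCast_iff hp.out).mpr hndvd).mul_right_eq_zero.mp hzero)

end IsAdditive

section ProdXAddC

variable {G : Type*} [AddCommGroup G] [Fintype G] (φ : G →+ R)

noncomputable def prodXAddC : R[X] := ∏ g, (X + C (φ g))

lemma isMonicOfDegree_prodXAddC [Nontrivial R] :
    IsMonicOfDegree (prodXAddC φ) (Fintype.card G) := by
  have hmonic : ∀ g ∈ Finset.univ, (X + C (φ g)).Monic := fun g _ => monic_X_add_C (φ g)
  refine ⟨?_, monic_prod_of_monic _ _ hmonic⟩
  simp [prodXAddC, natDegree_prod_of_monic _ _ hmonic]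

lemma prodXAddC_comp_X_add_C (h : G) : (prodXAddC φ).comp (X + C (φ h)) = prodXAddC φ := by
  rw [prodXAddC, prod_comp]
  simp_rw [add_comp, X_comp, C_comp, add_assoc, ← C_add, ← map_add]
  exact Fintype.prod_equiv (Equiv.addLeft h) _ _ fun g => by simp

lemma eval_prodXAddC (h : G) : (prodXAddC φ).eval (φ h) = 0 := by
  rw [prodXAddC, eval_prod]
  exact Finset.prod_eq_zero (Finset.mem_univ (-h)) (by simp)

lemma isAdditive_prodXAddC [IsDomain R] (hφ : Function.Injective φ) :
    (prodXAddC φ).IsAdditive := by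
  set f := prodXAddC φ
  have hcard : Fintype.card G ≠ 0 := Fintype.card_ne_zero
  have hf : IsMonicOfDegree (f.map C) (Fintype.card G) := by
    obtain ⟨hdeg, hmonic⟩ := isMonicOfDegree_prodXAddC φ
    exact ⟨by rw [hmonic.natDegree_map, hdeg], hmonic.map C⟩
  have hT : IsMonicOfDegree (taylor (X : R[X]) (f.map C)) (Fintype.card G) := by
    simpa [taylor_apply] using hf.comp one_ne_zero (isMonicOfDegree_X_add_one (X : R[X]))
  rw [IsAdditive, ← sub_eq_zero, ← sub_sub]
  refine eq_zero_of_natDegree_lt_card_of_eval_eq_zero _ (f := fun g => C (φ g))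
    (C_injective.comp hφ) (fun g => ?_) ?_
  · simp [taylor_eval, eval_map, eval₂_at_apply, add_comm (C (φ g)), ← comp.eq_1,
      prodXAddC_comp_X_add_C, eval_prodXAddC, f]
  · refine (natDegree_sub_le _ _).trans_lt ?_
    rw [natDegree_C, max_lt_iff]
    exact ⟨hT.natDegree_sub_lt hcard hf, Nat.pos_of_ne_zero hcard⟩

end ProdXAddC

end Polynomial

section Dickson

variable (p n : ℕ) [Fact p.Prime]

noncomputable abbrev linearForms : (Fin n → ZMod p) →+ MvPolynomial (Fin n) (ZMod p) :=
  (Fintype.linearCombination (ZMod p) MvPolynomial.X).toAddMonoidHom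

lemma dicksonF_eq_prodXAddC : dicksonF p n = prodXAddC (linearForms p n) := by
  simp [dicksonF, prodXAddC, Fintype.linearCombination_apply]

lemma isAdditive_dicksonF : (dicksonF p n).IsAdditive := by
  rw [dicksonF_eq_prodXAddC]
  exact isAdditive_prodXAddC _
    (MvPolynomial.linearIndependent_X _ _).fintypeLinearCombination_injective

lemma isMonicOfDegree_dicksonF : IsMonicOfDegree (dicksonF p n) (p ^ n) := by
  have h := isMonicOfDegree_prodXAddC (linearForms p n)
  rwa [Fintype.card_fun, ZMod.card, Fintype.card_fin, ← dicksonF_eq_prodXAddC] at h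

lemma dicksonF_coeff_eq_zero (j : ℕ) (hj : ¬ ∃ r ≤ n, j = p ^ r) : (dicksonF p n).coeff j = 0 := by
  by_contra hcoeff
  obtain ⟨r, rfl⟩ := (isAdditive_dicksonF p n).exists_eq_pow_of_coeff_ne_zero p hcoeff
  have hle : p ^ r ≤ p ^ n :=
    (isMonicOfDegree_dicksonF p n).natDegree_eq ▸ le_natDegree_of_ne_zero hcoeff
  exact hj ⟨r, (Nat.pow_le_pow_iff_right (Fact.out : p.Prime).one_lt).mp hle, rfl⟩

end Dickson

theorem dicksonF_monic_and_supported_on_p_powers_general (p n : ℕ) [Fact p.Prime] :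
    (dicksonF p n).Monic ∧
    (dicksonF p n).natDegree = p ^ n ∧
    (∀ j : ℕ, (¬ ∃ r ≤ n, j = p ^ r) → (dicksonF p n).coeff j = 0) ∧
    (∃! D : Fin n → MvPolynomial (Fin n) (ZMod p),
      dicksonF p n =
        Polynomial.X ^ (p ^ n) +
          ∑ r : Fin n, Polynomial.C (D r) * Polynomial.X ^ (p ^ (r : ℕ))) := by
  obtain ⟨hdeg, hmonic⟩ := isMonicOfDegree_dicksonF p n
  have hsupp := dicksonF_coeff_eq_zero p n
  have he : Function.Injective fun r : Fin (n + 1) => p ^ (r : ℕ) :=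
    (Nat.pow_right_injective (Fact.out : p.Prime).two_le).comp Fin.val_injective
  have hsum (D : Fin n → MvPolynomial (Fin n) (ZMod p)) :
      X ^ (p ^ n) + ∑ r : Fin n, C (D r) * X ^ (p ^ (r : ℕ)) =
        ∑ r : Fin (n + 1), C (Fin.snoc (α := fun _ => MvPolynomial (Fin n) (ZMod p)) D 1 r) *
          X ^ (p ^ (r : ℕ)) := by
    simp [Fin.sum_univ_castSucc, add_comm]
  refine ⟨hmonic, hdeg, hsupp, fun r => (dicksonF p n).coeff (p ^ (r : ℕ)), ?_, ?_⟩
  · show dicksonF p n = _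
    rw [hsum]
    refine (eq_sum_C_mul_X_pow_of_coeff_eq_zero he fun j hj => hsupp j ?_).trans ?_
    · rintro ⟨r, hr, rfl⟩
      exact hj ⟨⟨r, Nat.lt_succ_of_le hr⟩, rfl⟩
    · refine Finset.sum_congr rfl fun r _ => ?_
      induction r using Fin.lastCases <;> simp [← hdeg, hmonic.coeff_natDegree]
  · rintro D (hD : dicksonF p n = _)
    funext r
    rw [hsum] at hD
    simpa using ((congrArg (coeff · _) hD).trans (coeff_sum_C_mul_X_pow he _ r.castSucc)).symm

/-- The Dickson product polynomial is monic of degree `p^n` in `X`, its coefficient at `X^j`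
vanishes whenever `j` is not of the form `p^r` with `0 ≤ r ≤ n`, and consequently
`f_n(X) = X^{p^n} + ∑_{r=0}^{n-1} D_{n,r} X^{p^r}` for uniquely determined
polynomials `D_{n,r}`. -/
theorem dicksonF_monic_and_supported_on_p_powers (p n : ℕ) [Fact p.Prime] (hn : 1 ≤ n) :
    (dicksonF p n).Monic ∧
    (dicksonF p n).natDegree = p ^ n ∧
    (∀ j : ℕ, (¬ ∃ r ≤ n, j = p ^ r) → (dicksonF p n).coeff j = 0) ∧
    (∃! D : Fin n → MvPolynomial (Fin n) (ZMod p),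
      dicksonF p n =
        Polynomial.X ^ (p ^ n) +
          ∑ r : Fin n, Polynomial.C (D r) * Polynomial.X ^ (p ^ (r : ℕ))) :=
  dicksonF_monic_and_supported_on_p_powers_general p n
end

section
/- Each Dickson invariant D_{n,r} (0 ≤ r ≤ n−1) is invariant under the action of GL_n(𝔽_p): for every g ∈ GL_n(𝔽_p), the 𝔽_p-algebra automorphism of S sending y_i to ∑_j g_{i j} y_j maps D_{n,r} to itself. -/
open Polynomial

/-- The Dickson invariant `D_{n,r}`: the coefficient of `X^{p^r}` in `f_n`. -/
noncomputable def dicksonD (p n : ℕ) [Fact p.Prime] (r : ℕ) : MvPolynomial (Fin n) (ZMod p) :=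
  (dicksonF p n).coeff (p ^ r)

/-- Each Dickson invariant `D_{n,r}` is invariant under the action of `GL_n(𝔽_p)` on
`S = 𝔽_p[y_1, …, y_n]` by linear substitution of the variables: the algebra endomorphism
sending `y_i` to `∑_j g_{ij} y_j` maps `D_{n,r}` to itself. -/
theorem dicksonD_invariant (p n r : ℕ) [Fact p.Prime] (hr : r < n)
    (g : GL (Fin n) (ZMod p)) :
    MvPolynomial.aeval
      (fun i : Fin n =>
        ∑ j : Fin n, ((g : Matrix (Fin n) (Fin n) (ZMod p)) i j) • MvPolynomial.X j)
      (dicksonD p n r) = dicksonD p n r := by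
  classical
  set M : Matrix (Fin n) (Fin n) (ZMod p) := (g : Matrix (Fin n) (Fin n) (ZMod p)) with hM
  set φ : MvPolynomial (Fin n) (ZMod p) →ₐ[ZMod p] MvPolynomial (Fin n) (ZMod p) :=
    MvPolynomial.aeval (fun i : Fin n => ∑ j : Fin n, M i j • MvPolynomial.X j) with hφ
  -- the bijection c ↦ c ᵥ* M on coefficient vectors
  let e : (Fin n → ZMod p) ≃ (Fin n → ZMod p) :=
    { toFun := fun c => Matrix.vecMul c M
      invFun := fun c => Matrix.vecMul c (↑g⁻¹ : Matrix (Fin n) (Fin n) (ZMod p))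
      left_inv := fun c => by
        show Matrix.vecMul (Matrix.vecMul c M) (↑g⁻¹ : Matrix (Fin n) (Fin n) (ZMod p)) = c
        rw [Matrix.vecMul_vecMul, hM, ← Units.val_mul, mul_inv_cancel, Units.val_one,
          Matrix.vecMul_one]
      right_inv := fun c => by
        show Matrix.vecMul (Matrix.vecMul c (↑g⁻¹ : Matrix (Fin n) (Fin n) (ZMod p))) M = c
        rw [Matrix.vecMul_vecMul, hM, ← Units.val_mul, inv_mul_cancel, Units.val_one,
          Matrix.vecMul_one] }
  have key : (dicksonF p n).map (φ : MvPolynomial (Fin n) (ZMod p) →+* MvPolynomial (Fin n) (ZMod p)) = dicksonF p n := by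
    unfold dicksonF
    rw [Polynomial.map_prod]
    have hmap : ∀ c : Fin n → ZMod p,
        (Polynomial.X + Polynomial.C (∑ i : Fin n, c i • MvPolynomial.X i)).map
            (φ : MvPolynomial (Fin n) (ZMod p) →+* MvPolynomial (Fin n) (ZMod p))
          = Polynomial.X + Polynomial.C (∑ i : Fin n, (Matrix.vecMul c M) i • MvPolynomial.X i) := by
      intro c
      have haux : φ (∑ i : Fin n, c i • MvPolynomial.X i)
          = ∑ i : Fin n, (Matrix.vecMul c M) i • MvPolynomial.X i := by
        simp only [hφ, map_sum, map_smul, MvPolynomial.aeval_X, Finset.smul_sum, smul_smul]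
        rw [Finset.sum_comm]
        refine Finset.sum_congr rfl fun j _ => ?_
        rw [← Finset.sum_smul]
        rfl
      rw [Polynomial.map_add, Polynomial.map_X, Polynomial.map_C]
      simp only [AlgHom.coe_toRingHom]
      rw [haux]
    calc ∏ c : Fin n → ZMod p,
          (Polynomial.X + Polynomial.C (∑ i : Fin n, c i • MvPolynomial.X i)).map
            (φ : MvPolynomial (Fin n) (ZMod p) →+* MvPolynomial (Fin n) (ZMod p))
        = ∏ c : Fin n → ZMod p,
            (Polynomial.X + Polynomial.C (∑ i : Fin n, (e c) i • MvPolynomial.X i)) := by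
          exact Finset.prod_congr rfl fun c _ => hmap c
      _ = ∏ c : Fin n → ZMod p,
            (Polynomial.X + Polynomial.C (∑ i : Fin n, c i • MvPolynomial.X i)) :=
          e.prod_comp fun c =>
            Polynomial.X + Polynomial.C (∑ i : Fin n, c i • MvPolynomial.X i)
  show φ (dicksonD p n r) = dicksonD p n r
  unfold dicksonD
  conv_rhs => rw [← key]
  exact (Polynomial.coeff_map (φ : MvPolynomial (Fin n) (ZMod p) →+* MvPolynomial (Fin n) (ZMod p)) _).symm
end

section
/- The Dickson invariants D_{n,0}, D_{n,1}, …, D_{n,n−1} are algebraically independent over 𝔽_p in the polynomial ring S = 𝔽_p[y_1,…,y_n]. -/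
open Polynomial

/-!
The polynomial `f_n` is a `p`-polynomial: only the monomials `X ^ p ^ r` occur in it. For a
`p`-polynomial `f` and `c ∈ 𝔽_p` one has `f (X + c t) = f + c • f t`, so the identity
`∏_c (x + c u) = x ^ p - u ^ (p - 1) x` turns `f_{n+1} = ∏_c f_n (X + c y_{n+1})` into
`f_n ^ p - f_n (y_{n+1}) ^ (p - 1) f_n`, again a `p`-polynomial. As `f_n` is monic of degree
`p ^ n`, its coefficients are `0`, `1` and the `D_{n,r}`; every `y_i` is a root of `f_n`, hence
integral over `𝔽_p[D_{n,0}, …, D_{n,n-1}]`. So `S`, of transcendence degree `n`, is algebraic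
over the subalgebra generated by these `n` elements, and they form a transcendence basis.
-/

theorem FiniteField.prod_X_sub_C_eq_X_pow_card_sub_X (K : Type*) [Field K] [Fintype K] :
    ∏ c : K, (X - C c) = X ^ Fintype.card K - X := by
  have hmonic : (X ^ Fintype.card K - X : K[X]).Monic :=
    monic_X_pow_sub (by rw [degree_X]; exact_mod_cast Fintype.one_lt_card)
  have hcard : (X ^ Fintype.card K - X : K[X]).roots.card =
      (X ^ Fintype.card K - X : K[X]).natDegree := by
    rw [FiniteField.roots_X_pow_card_sub_X,
      FiniteField.X_pow_card_sub_X_natDegree_eq K Fintype.one_lt_card]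
    rfl
  simpa [FiniteField.roots_X_pow_card_sub_X] using
    prod_multiset_X_sub_C_of_monic_of_roots_card_eq hmonic hcard

namespace ZMod

variable (p : ℕ) [Fact p.Prime]

theorem prod_sub_algebraMap_eq_pow_sub_self {A : Type*} [CommRing A] [Algebra (ZMod p) A]
    (y : A) : ∏ c : ZMod p, (y - algebraMap (ZMod p) A c) = y ^ p - y := by
  simpa [ZMod.card] using
    congrArg (aeval y) (FiniteField.prod_X_sub_C_eq_X_pow_card_sub_X (ZMod p))

theorem prod_add_smul_eq_of_field {K : Type*} [Field K] [Algebra (ZMod p) K] (x u : K) :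
    ∏ c : ZMod p, (x + c • u) = x ^ p - u ^ (p - 1) * x := by
  have hp := (Fact.out : p.Prime).one_lt
  rcases eq_or_ne u 0 with rfl | hu
  · simp [ZMod.card, zero_pow (Nat.sub_ne_zero_of_lt hp)]
  calc ∏ c : ZMod p, (x + c • u) = ∏ c : ZMod p, (x - c • u) :=
        Fintype.prod_equiv (Equiv.neg _) _ _ fun c => by simp [sub_eq_add_neg]
    _ = ∏ c : ZMod p, u * (x / u - algebraMap (ZMod p) K c) :=
        Fintype.prod_congr _ _ fun c => by rw [Algebra.smul_def]; field_simp
    _ = u ^ p * ((x / u) ^ p - x / u) := by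
        rw [Finset.prod_mul_distrib, Finset.prod_const, Finset.card_univ, ZMod.card,
          prod_sub_algebraMap_eq_pow_sub_self]
    _ = x ^ p - u ^ (p - 1) * x := by
        have hup : u ^ p = u ^ (p - 1) * u := by rw [← pow_succ, Nat.sub_add_cancel hp.le]
        rw [mul_sub, div_pow, mul_div_cancel₀ _ (pow_ne_zero _ hu), hup, mul_assoc,
          mul_div_cancel₀ _ hu]

theorem prod_add_smul_eq {R : Type*} [CommRing R] [IsDomain R] [Algebra (ZMod p) R] (x u : R) :
    ∏ c : ZMod p, (x + c • u) = x ^ p - u ^ (p - 1) * x := by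
  apply IsFractionRing.injective R (FractionRing R)
  simpa [Algebra.smul_def, IsScalarTower.algebraMap_apply (ZMod p) R (FractionRing R)] using
    prod_add_smul_eq_of_field p (algebraMap R (FractionRing R) x) (algebraMap R (FractionRing R) u)

end ZMod

noncomputable def pPolynomials (p : ℕ) (A : Type*) [CommRing A] : Submodule A A[X] :=
  Submodule.span A (Set.range fun r : ℕ => (X : A[X]) ^ p ^ r)

namespace pPolynomials

variable {p : ℕ} {A : Type*} [CommRing A]

theorem X_mem : (X : A[X]) ∈ pPolynomials p A :=
  Submodule.subset_span ⟨0, pow_one _⟩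

theorem coeff_eq_zero {f : A[X]} (hf : f ∈ pPolynomials p A) {k : ℕ} (hk : ∀ r, k ≠ p ^ r) :
    f.coeff k = 0 := by
  induction hf using Submodule.span_induction with
  | mem f h =>
    obtain ⟨r, rfl⟩ := h
    simp [coeff_X_pow, hk r]
  | zero => simp
  | add f g _ _ hf hg => simp [hf, hg]
  | smul a f _ hf => simp [hf]

variable [hp : Fact p.Prime]

theorem eval_smul [Algebra (ZMod p) A] {f : A[X]} (hf : f ∈ pPolynomials p A)
    (c : ZMod p) (s : A) : f.eval (c • s) = c • f.eval s := by
  induction hf using Submodule.span_induction with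
  | mem f h =>
    obtain ⟨r, rfl⟩ := h
    simp [_root_.smul_pow, ZMod.pow_card_pow]
  | zero => simp
  | add f g _ _ hf hg => simp [hf, hg]
  | smul a f _ hf => simp [hf]

theorem pow_mem [CharP A p] {f : A[X]} (hf : f ∈ pPolynomials p A) :
    f ^ p ∈ pPolynomials p A := by
  induction hf using Submodule.span_induction with
  | mem f h =>
    obtain ⟨r, rfl⟩ := h
    exact Submodule.subset_span ⟨r + 1, by rw [← pow_mul, ← pow_succ]⟩
  | zero => simp [zero_pow hp.out.ne_zero]
  | add f g _ _ hf hg => simpa [add_pow_char] using add_mem hf hg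
  | smul a f _ hf =>
    rw [smul_eq_C_mul, mul_pow, ← C_pow, ← smul_eq_C_mul]
    exact Submodule.smul_mem _ _ hf

theorem comp_X_add_C [CharP A p] {f : A[X]} (hf : f ∈ pPolynomials p A) (t : A) :
    f.comp (X + C t) = f + C (f.eval t) := by
  induction hf using Submodule.span_induction with
  | mem f h =>
    obtain ⟨r, rfl⟩ := h
    simp [add_pow_char_pow]
  | zero => simp
  | add f g _ _ hf hg => rw [add_comp, hf, hg, eval_add, C_add]; ring
  | smul a f _ hf => rw [smul_eq_C_mul, mul_comp, C_comp, hf, eval_mul, eval_C, C_mul]; ring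

theorem prod_comp_X_add_C_smul_mem [IsDomain A] [Algebra (ZMod p) A] {f : A[X]}
    (hf : f ∈ pPolynomials p A) (t : A) :
    ∏ c : ZMod p, f.comp (X + C (c • t)) ∈ pPolynomials p A := by
  have : CharP A p := charP_of_injective_algebraMap (algebraMap (ZMod p) A).injective p
  have hprod : ∏ c : ZMod p, f.comp (X + C (c • t)) = f ^ p - C (f.eval t) ^ (p - 1) * f := by
    rw [← ZMod.prod_add_smul_eq p]
    refine Fintype.prod_congr _ _ fun c => ?_
    rw [comp_X_add_C hf, eval_smul hf, smul_C]
  rw [hprod, ← C_pow, ← smul_eq_C_mul]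
  exact sub_mem (pow_mem hf) (Submodule.smul_mem _ _ hf)

end pPolynomials

section SubspacePolynomial

variable (p : ℕ) [Fact p.Prime] {A : Type*} [CommRing A] [Algebra (ZMod p) A]

noncomputable def subspacePolynomial {m : ℕ} (v : Fin m → A) : A[X] :=
  ∏ c : Fin m → ZMod p, (X + C (∑ i, c i • v i))

variable {p}

theorem subspacePolynomial_fin_zero (v : Fin 0 → A) : subspacePolynomial p v = X := by
  simp [subspacePolynomial]

theorem subspacePolynomial_fin_succ {m : ℕ} (v : Fin (m + 1) → A) :
    subspacePolynomial p v =
      ∏ c₀ : ZMod p, (subspacePolynomial p (Fin.tail v)).comp (X + C (c₀ • v 0)) := by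
  rw [subspacePolynomial, ← (Fin.consEquiv fun _ => ZMod p).prod_comp, Fintype.prod_prod_type]
  refine Fintype.prod_congr _ _ fun c₀ => ?_
  rw [subspacePolynomial, prod_comp]
  refine Fintype.prod_congr _ _ fun c => ?_
  simp only [Fin.consEquiv, Equiv.coe_fn_mk, Fin.sum_univ_succ, Fin.cons_zero, Fin.cons_succ,
    map_add, Fin.tail, add_comp, X_comp, C_comp]
  ring

theorem monic_subspacePolynomial {m : ℕ} (v : Fin m → A) : (subspacePolynomial p v).Monic :=
  monic_prod_of_monic _ _ fun _ _ => monic_X_add_C _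

theorem natDegree_subspacePolynomial [Nontrivial A] {m : ℕ} (v : Fin m → A) :
    (subspacePolynomial p v).natDegree = p ^ m := by
  rw [subspacePolynomial, natDegree_prod_of_monic _ _ fun _ _ => monic_X_add_C _]
  simp only [natDegree_X_add_C]
  simp [ZMod.card]

theorem isRoot_subspacePolynomial {m : ℕ} (v : Fin m → A) (i : Fin m) :
    (subspacePolynomial p v).IsRoot (v i) := by
  classical
  rw [subspacePolynomial, IsRoot, eval_prod]
  refine Finset.prod_eq_zero (i := -Pi.single i 1) (Finset.mem_univ _) ?_
  simp [Pi.single_apply]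

theorem subspacePolynomial_mem_pPolynomials [IsDomain A] {m : ℕ} (v : Fin m → A) :
    subspacePolynomial p v ∈ pPolynomials p A := by
  induction m with
  | zero => simpa [subspacePolynomial_fin_zero] using pPolynomials.X_mem
  | succ m ih =>
    rw [subspacePolynomial_fin_succ]
    exact pPolynomials.prod_comp_X_add_C_smul_mem (ih _) _

end SubspacePolynomial

section Dickson

variable (p n : ℕ) [Fact p.Prime]

theorem monic_dicksonF : (dicksonF p n).Monic :=
  monic_subspacePolynomial _

theorem natDegree_dicksonF : (dicksonF p n).natDegree = p ^ n :=
  natDegree_subspacePolynomial _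

theorem isRoot_dicksonF (i : Fin n) : (dicksonF p n).IsRoot (MvPolynomial.X i) :=
  isRoot_subspacePolynomial _ i

theorem dicksonF_mem_pPolynomials :
    dicksonF p n ∈ pPolynomials p (MvPolynomial (Fin n) (ZMod p)) :=
  subspacePolynomial_mem_pPolynomials _

theorem coeff_dicksonF_mem_adjoin_dicksonD (k : ℕ) :
    (dicksonF p n).coeff k ∈
      Algebra.adjoin (ZMod p) (Set.range fun r : Fin n => dicksonD p n r) := by
  by_cases hk : ∃ r, k = p ^ r
  · obtain ⟨r, rfl⟩ := hk
    rcases lt_trichotomy r n with hr | rfl | hr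
    · exact Algebra.subset_adjoin ⟨⟨r, hr⟩, rfl⟩
    · rw [← natDegree_dicksonF, (monic_dicksonF p r).coeff_natDegree]
      exact one_mem _
    · rw [coeff_eq_zero_of_natDegree_lt (natDegree_dicksonF p n ▸
        Nat.pow_lt_pow_right (Fact.out : p.Prime).one_lt hr)]
      exact zero_mem _
  · push Not at hk
    rw [pPolynomials.coeff_eq_zero (dicksonF_mem_pPolynomials p n) hk]
    exact zero_mem _

theorem isIntegral_X_adjoin_dicksonD (i : Fin n) :
    IsIntegral (Algebra.adjoin (ZMod p) (Set.range fun r : Fin n => dicksonD p n r))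
      (MvPolynomial.X i : MvPolynomial (Fin n) (ZMod p)) := by
  refine IsIntegral.of_aeval_monic_of_isIntegral_coeff (monic_dicksonF p n) ?_ ?_ fun k => ?_
  · rw [natDegree_dicksonF]
    exact (pow_pos (Fact.out : p.Prime).pos n).ne'
  · rw [(isRoot_dicksonF p n i).eq_zero]
    exact isIntegral_zero
  · exact isIntegral_algebraMap (x := (⟨_, coeff_dicksonF_mem_adjoin_dicksonD p n k⟩ :
      Algebra.adjoin (ZMod p) (Set.range fun r : Fin n => dicksonD p n r)))

theorem algebraIsIntegral_adjoin_dicksonD :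
    Algebra.IsIntegral (Algebra.adjoin (ZMod p) (Set.range fun r : Fin n => dicksonD p n r))
      (MvPolynomial (Fin n) (ZMod p)) := by
  rw [← integralClosure_eq_top_iff]
  apply Subalgebra.restrictScalars_injective (ZMod p)
  rw [Subalgebra.restrictScalars_top, eq_top_iff, ← MvPolynomial.adjoin_range_X,
    Algebra.adjoin_le_iff]
  rintro _ ⟨i, rfl⟩
  exact isIntegral_X_adjoin_dicksonD p n i

end Dickson

/-- The Dickson invariants `D_{n,0}, …, D_{n,n-1}` are algebraically independent over `𝔽_p`. -/
theorem dicksonD_algebraicIndependent (p n : ℕ) [Fact p.Prime] :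
    AlgebraicIndependent (ZMod p) (fun r : Fin n => dicksonD p n (r : ℕ)) := by
  have := algebraIsIntegral_adjoin_dicksonD p n
  exact (Algebra.IsAlgebraic.isTranscendenceBasis_of_le_trdeg_of_finite (ZMod p) _ (by simp)).1
end

section
/- Let R be a commutative ring, I ⊆ R an ideal, v ∈ R, and N a finitely generated R-module such that for every y ∈ N there exists r ≥ 0 with v^r · y ∈ I·N. Then there exist r ≥ 1 and u ∈ I such that (v^r + u) · y = 0 for all y ∈ N, i.e., the annihilator of N contains an element of the form v^r + u with u ∈ I. -/
/-!
Powers of `v` act nilpotently on the finitely generated module `N ⧸ I • N`, so a single power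
`a = v ^ s` maps `N` into `I • N`. Cayley–Hamilton for the endomorphism `a • id` then gives a monic
polynomial `p` whose lower coefficients lie in `I` and with `p(a)` annihilating `N`; and
`p(a) = a ^ deg p + u` with `u ∈ I`.
-/

open Polynomial

theorem Polynomial.Monic.eval_sub_pow_natDegree_mem {R : Type*} [CommRing R] {I : Ideal R}
    {p : R[X]} (hp : p.Monic) (hI : ∀ i < p.natDegree, p.coeff i ∈ I) (a : R) :
    p.eval a - a ^ p.natDegree ∈ I := by
  have hp_eval :
      p.eval a = a ^ p.natDegree + ∑ i ∈ Finset.range p.natDegree, p.coeff i * a ^ i := by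
    conv_lhs => rw [hp.as_sum]
    simp [eval_finsetSum]
  rw [hp_eval, add_sub_cancel_left]
  exact Ideal.sum_mem _ fun i hi ↦ I.mul_mem_right _ (hI i (Finset.mem_range.mp hi))

section

variable {R M : Type*} [CommRing R] [AddCommGroup M] [Module R M] [Module.Finite R M]

theorem Submodule.exists_pow_smul_mem_of_forall_exists_pow_smul_mem {P : Submodule R M} {v : R}
    (h : ∀ y : M, ∃ r : ℕ, v ^ r • y ∈ P) : ∃ s : ℕ, ∀ y : M, v ^ s • y ∈ P := by
  have hnil : IsNilpotent (algebraMap R (Module.End R (M ⧸ P)) v) := by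
    refine Module.End.isNilpotent_iff_of_finite.mpr fun q ↦ ?_
    induction q using Submodule.Quotient.induction_on with
    | H y =>
      obtain ⟨r, hr⟩ := h y
      refine ⟨r, ?_⟩
      simpa [← map_pow, ← Submodule.Quotient.mk_smul, Submodule.Quotient.mk_eq_zero] using hr
  obtain ⟨s, hs⟩ := hnil
  refine ⟨s, fun y ↦ (Submodule.Quotient.mk_eq_zero P).mp ?_⟩
  simpa [← map_pow] using LinearMap.congr_fun hs (Submodule.Quotient.mk y)

theorem exists_pow_add_mem_annihilator_of_forall_smul_mem_smul_top {I : Ideal R} {a : R}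
    (h : ∀ y : M, a • y ∈ I • (⊤ : Submodule R M)) :
    ∃ n : ℕ, ∃ u ∈ I, a ^ n + u ∈ Module.annihilator R M := by
  have hrange : LinearMap.range (algebraMap R (Module.End R M) a) ≤ I • ⊤ := by
    rintro _ ⟨y, rfl⟩
    simpa using h y
  obtain ⟨p, hp, -, hcoeff, hp_eval⟩ :=
    LinearMap.exists_monic_and_natDegree_eq_and_coeff_mem_pow_and_aeval_eq_zero R _ I hrange
  refine ⟨p.natDegree, p.eval a - a ^ p.natDegree,
    hp.eval_sub_pow_natDegree_mem (fun i hi ↦ Ideal.pow_le_self (by omega) (hcoeff i)) a, ?_⟩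
  rw [add_sub_cancel, Module.mem_annihilator]
  intro y
  simpa [aeval_algebraMap_apply] using LinearMap.congr_fun hp_eval y

end

/-- Let `R` be a commutative ring, `I ⊆ R` an ideal, `v ∈ R`, and `N` a finitely generated
`R`-module such that every `y ∈ N` is sent into `I·N` by some power of `v`. Then the
annihilator of `N` contains an element of the form `v^r + u` with `r ≥ 1` and `u ∈ I`. -/
theorem annihilator_contains_vpow_add_of_pow_smul_mem (R : Type) [CommRing R]
    (I : Ideal R) (v : R) (N : Type) [AddCommGroup N] [Module R N] [Module.Finite R N]
    (h : ∀ y : N, ∃ r : ℕ, v ^ r • y ∈ I • (⊤ : Submodule R N)) :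
    ∃ r : ℕ, 1 ≤ r ∧ ∃ u ∈ I, ∀ y : N, (v ^ r + u) • y = 0 := by
  obtain ⟨s, hs⟩ := Submodule.exists_pow_smul_mem_of_forall_exists_pow_smul_mem h
  have hs' : ∀ y : N, v ^ (s + 1) • y ∈ I • (⊤ : Submodule R N) := fun y ↦ by
    rw [pow_succ', mul_smul]
    exact Submodule.smul_mem _ v (hs y)
  obtain ⟨n, u, hu, hann⟩ := exists_pow_add_mem_annihilator_of_forall_smul_mem_smul_top hs'
  -- One more factor `v ^ (s + 1)` makes the exponent positive even when `n = 0` (as for `N = 0`).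
  refine ⟨(s + 1) * (n + 1), Nat.mul_pos s.succ_pos n.succ_pos, u * v ^ (s + 1),
    I.mul_mem_right _ hu, fun y ↦ ?_⟩
  have := Module.mem_annihilator.mp ((Module.annihilator R N).mul_mem_right (v ^ (s + 1)) hann) y
  convert this using 2
  ring
end
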